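/- arXiv:1307.6200 — 4 statements merged into one kernel-verified Lean document; each statement's English description precedes it below -/
import Mathlib

section
/- There exists a sequence of polynomials P_k ∈ ℤ[x] of exact degrees n_k → ∞, all of whose complex zeros are simple and lie in the real segment [−1,1], whose leading coefficients a_{n_k} satisfy liminf_{k→∞} |a_{n_k}|^{1/n_k} ≤ 1.54170092. -/
/-!
Let `G₀ = 2X - 1`, `H₀ = 1`, `G_{n+1} = G_n² + (X² - X) H_n²`, `H_{n+1} = H_n G_n`. For the
rational map `v(x) = (x - x²) / (3x² - 3x + 1)` one has `q(x)^{2^n} G_n(v(x)) = ± G_{n+1}(x)`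
with `q(x) = 3x² - 3x + 1 > 0`, so each root `r ∈ (0, 1)` of `G_n` yields the two roots
`(1 ± √((1 - r) / (1 + 3r))) / 2 ∈ (0, 1)` of `G_{n+1}`, which `v` sends back to `r`. Since
`deg G_n = 2^n`, all roots of `G_n` are simple and lie in `(0, 1)`, and `P_k = G_k(X²)` has
`2^{k+1}` simple roots `±√r` in `(-1, 1)`.

The leading coefficient `c_k` of `G_k` satisfies `c_{k+1} = c_k² + m_k²`, `m_{k+1} = m_k c_k`,
whence `c_{k+2} / c_{k+1} ≤ (c_{k+1} / c_k)²`. One exact check `c_18 ≤ c_17 B^{2^18}` with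
`B = 1.54170092` then propagates to `c_{k+1} ≤ c_k B^{2^{k+1}}`, hence `c_k ≤ B^{2^{k+1}}`, for
all `k ≥ 17`.
-/

open Filter Polynomial

namespace IntPolySegment

lemma natDegree_add_eq_and_leadingCoeff_add {R : Type*} [Semiring R] {p q : R[X]} {N : ℕ}
    (hp : p.natDegree = N) (hq : q.natDegree = N) (h : p.leadingCoeff + q.leadingCoeff ≠ 0) :
    (p + q).natDegree = N ∧ (p + q).leadingCoeff = p.leadingCoeff + q.leadingCoeff := by
  have hcoeff : (p + q).coeff N = p.leadingCoeff + q.leadingCoeff := by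
    rw [coeff_add, leadingCoeff, leadingCoeff, hp, hq]
  have hdeg : (p + q).natDegree = N :=
    le_antisymm ((natDegree_add_le p q).trans (by rw [hp, hq, max_self]))
      (le_natDegree_of_ne_zero (hcoeff ▸ h))
  exact ⟨hdeg, by rw [leadingCoeff, hdeg, hcoeff]⟩

noncomputable def pairSeq : ℕ → ℤ[X] × ℤ[X]
  | 0 => (2 * X - 1, 1)
  | n + 1 => ((pairSeq n).1 ^ 2 + (X ^ 2 - X) * (pairSeq n).2 ^ 2, (pairSeq n).2 * (pairSeq n).1)

noncomputable def G (n : ℕ) : ℤ[X] := (pairSeq n).1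

noncomputable def H (n : ℕ) : ℤ[X] := (pairSeq n).2

lemma G_zero : G 0 = 2 * X - 1 := rfl

lemma H_zero : H 0 = 1 := rfl

lemma G_succ (n : ℕ) : G (n + 1) = G n ^ 2 + (X ^ 2 - X) * H n ^ 2 := rfl

lemma H_succ (n : ℕ) : H (n + 1) = H n * G n := rfl

def lcPair : ℕ → ℕ × ℕ
  | 0 => (2, 1)
  | n + 1 => ((lcPair n).1 ^ 2 + (lcPair n).2 ^ 2, (lcPair n).2 * (lcPair n).1)

def lcG (n : ℕ) : ℕ := (lcPair n).1

def lcH (n : ℕ) : ℕ := (lcPair n).2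

lemma lcG_succ (n : ℕ) : lcG (n + 1) = lcG n ^ 2 + lcH n ^ 2 := rfl

lemma lcH_succ (n : ℕ) : lcH (n + 1) = lcH n * lcG n := rfl

lemma lcG_pos_and_lcH_pos (n : ℕ) : 0 < lcG n ∧ 0 < lcH n := by
  induction n with
  | zero => exact ⟨by decide, by decide⟩
  | succ n ih => exact ⟨lcG_succ n ▸ Nat.add_pos_left (pow_pos ih.1 2) _, mul_pos ih.2 ih.1⟩

lemma lcG_pos (n : ℕ) : 0 < lcG n := (lcG_pos_and_lcH_pos n).1

lemma sq_lcG_le_lcG_succ (n : ℕ) : lcG n ^ 2 ≤ lcG (n + 1) := by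
  rw [lcG_succ]; exact Nat.le_add_right _ _

lemma lcG_add_two_mul_sq_le (n : ℕ) : lcG (n + 2) * lcG n ^ 2 ≤ lcG (n + 1) ^ 3 := by
  have h := pow_le_pow_left₀ (Nat.zero_le _) (sq_lcG_le_lcG_succ n) 2
  rw [lcG_succ (n + 1), lcH_succ, lcG_succ n] at *
  nlinarith

lemma monic_X_sq_sub_X : (X ^ 2 - X : ℤ[X]).Monic :=
  monic_X_pow_sub (by rw [degree_X]; norm_num)

lemma natDegree_X_sq_sub_X : (X ^ 2 - X : ℤ[X]).natDegree = 2 := by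
  rw [natDegree_sub_eq_left_of_natDegree_lt] <;> simp

lemma natDegree_and_leadingCoeff_G_H (n : ℕ) :
    (G n).natDegree = 2 ^ n ∧ (G n).leadingCoeff = lcG n ∧
      (H n).natDegree + 1 = 2 ^ n ∧ (H n).leadingCoeff = lcH n := by
  induction n with
  | zero =>
    have h : (2 * X - 1 : ℤ[X]).natDegree = 1 := by compute_degree!
    refine ⟨h, ?_, by simp [H_zero], by simp [H_zero, lcH, lcPair]⟩
    rw [G_zero, leadingCoeff, h]
    simp [lcG, lcPair, coeff_one]
  | succ n ih =>
    obtain ⟨hGd, hGl, hHd, hHl⟩ := ih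
    have hH0 : H n ≠ 0 :=
      leadingCoeff_ne_zero.1 (by rw [hHl]; exact_mod_cast (lcG_pos_and_lcH_pos n).2.ne')
    have hG0 : G n ≠ 0 := ne_zero_of_natDegree_gt (n := 0) (by rw [hGd]; positivity)
    have hsq := natDegree_add_eq_and_leadingCoeff_add (p := G n ^ 2) (q := (X ^ 2 - X) * H n ^ 2)
      (N := 2 ^ (n + 1)) (by rw [natDegree_pow, hGd]; ring)
      (by rw [monic_X_sq_sub_X.natDegree_mul' (pow_ne_zero _ hH0), natDegree_pow,
        natDegree_X_sq_sub_X, pow_succ, ← hHd]; ring)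
      (by rw [leadingCoeff_mul, leadingCoeff_pow, leadingCoeff_pow, monic_X_sq_sub_X.leadingCoeff,
        hGl, hHl]; have := lcG_pos n; positivity)
    refine ⟨?_, ?_, ?_, ?_⟩
    · rw [G_succ, hsq.1]
    · rw [G_succ, hsq.2, leadingCoeff_mul, leadingCoeff_pow, leadingCoeff_pow,
        monic_X_sq_sub_X.leadingCoeff, hGl, hHl, lcG_succ]
      push_cast; ring
    · rw [H_succ, natDegree_mul hH0 hG0, hGd, pow_succ]
      omega
    · rw [H_succ, leadingCoeff_mul, hGl, hHl, lcH_succ]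
      push_cast; ring

lemma card_biUnion_pair {α β : Type*} [DecidableEq α] (φ : α → β) {S : Finset β} {a b : β → α}
    (ha : ∀ r ∈ S, φ (a r) = r) (hb : ∀ r ∈ S, φ (b r) = r) (hab : ∀ r ∈ S, a r ≠ b r) :
    (S.biUnion fun r => {a r, b r}).card = 2 * S.card := by
  have hfiber : ∀ r ∈ S, ∀ x ∈ ({a r, b r} : Finset α), φ x = r := by
    intro r hr x hx
    simp only [Finset.mem_insert, Finset.mem_singleton] at hx
    rcases hx with rfl | rfl
    exacts [ha r hr, hb r hr]
  have hdisj : (S : Set β).PairwiseDisjoint fun r => ({a r, b r} : Finset α) :=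
    fun r hr r' hr' hne => Finset.disjoint_left.2 fun x hx hx' =>
      hne ((hfiber r hr x hx).symm.trans (hfiber r' hr' x hx'))
  rw [Finset.card_biUnion hdisj, Finset.sum_congr rfl fun r hr => Finset.card_pair (hab r hr),
    Finset.sum_const, smul_eq_mul, mul_comm]

lemma map_mem_of_mem_biUnion_pair {α β : Type*} [DecidableEq α] {φ : α → β} {S : Finset β}
    {a b : β → α} (ha : ∀ r ∈ S, φ (a r) = r) (hb : ∀ r ∈ S, φ (b r) = r) {x : α}
    (hx : x ∈ S.biUnion fun r => {a r, b r}) : φ x ∈ S := by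
  obtain ⟨r, hr, hx⟩ := Finset.mem_biUnion.1 hx
  simp only [Finset.mem_insert, Finset.mem_singleton] at hx
  rcases hx with rfl | rfl
  · rwa [ha r hr]
  · rwa [hb r hr]

noncomputable def rootMapDen (x : ℝ) : ℝ := 3 * x ^ 2 - 3 * x + 1

noncomputable def rootMap (x : ℝ) : ℝ := (x - x ^ 2) / rootMapDen x

lemma rootMapDen_pos (x : ℝ) : 0 < rootMapDen x := by
  rw [rootMapDen]; nlinarith [sq_nonneg (2 * x - 1)]

lemma mem_Ioo_of_rootMap_pos {x : ℝ} (h : 0 < rootMap x) : x ∈ Set.Ioo 0 1 := by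
  have : 0 < x - x ^ 2 := (div_pos_iff_of_pos_right (rootMapDen_pos x)).1 h
  constructor <;> nlinarith

lemma rootMap_one_add_div_two {r s : ℝ} (hr : 0 < 1 + 3 * r)
    (hs : s ^ 2 = (1 - r) / (1 + 3 * r)) : rootMap ((1 + s) / 2) = r := by
  rw [rootMap, div_eq_iff (rootMapDen_pos _).ne', rootMapDen]
  rw [eq_div_iff hr.ne'] at hs
  linear_combination (-1 / 4 : ℝ) * hs

lemma aeval_G_succ (x : ℝ) (n : ℕ) :
    aeval x (G (n + 1)) = aeval x (G n) ^ 2 + (x ^ 2 - x) * aeval x (H n) ^ 2 := by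
  simp [G_succ]

lemma aeval_H_succ (x : ℝ) (n : ℕ) : aeval x (H (n + 1)) = aeval x (H n) * aeval x (G n) := by
  simp [H_succ]

lemma sq_aeval_rootMap (x : ℝ) (n : ℕ) :
    (rootMapDen x ^ 2 ^ n * aeval (rootMap x) (G n)) ^ 2 = aeval x (G (n + 1)) ^ 2 ∧
      (rootMap x ^ 2 - rootMap x) * (rootMapDen x ^ 2 ^ n * aeval (rootMap x) (H n)) ^ 2 =
        (x ^ 2 - x) * aeval x (H (n + 1)) ^ 2 := by
  have hq := (rootMapDen_pos x).ne'
  have hw : (rootMap x ^ 2 - rootMap x) * rootMapDen x ^ 2 = (x ^ 2 - x) * (2 * x - 1) ^ 2 := by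
    rw [rootMap]; field_simp; rw [rootMapDen]; ring
  have hv : rootMapDen x * (2 * rootMap x - 1) = -((2 * x - 1) ^ 2 + (x ^ 2 - x)) := by
    rw [rootMap]; field_simp; rw [rootMapDen]; ring
  set v := rootMap x
  set q := rootMapDen x
  -- Squares are compared because `q * G₀(v) = -G₁(x)` carries a sign.
  induction n with
  | zero =>
    simp only [aeval_G_succ, aeval_H_succ, G_zero, H_zero, map_sub, map_mul, map_one, map_ofNat,
      aeval_X, pow_zero, pow_one, mul_one, one_pow, one_mul]
    exact ⟨by rw [hv]; ring, hw⟩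
  | succ n ih =>
    obtain ⟨hG, hH⟩ := ih
    have hq2 : q ^ 2 ^ (n + 1) = (q ^ 2 ^ n) ^ 2 := by rw [pow_succ, pow_mul]
    have hG' : (q ^ 2 ^ (n + 1) * aeval v (G (n + 1))) =
        (q ^ 2 ^ n * aeval v (G n)) ^ 2 + (v ^ 2 - v) * (q ^ 2 ^ n * aeval v (H n)) ^ 2 := by
      rw [aeval_G_succ, hq2]; ring
    refine ⟨by rw [hG', hG, hH, aeval_G_succ x (n + 1)], ?_⟩
    rw [aeval_H_succ, aeval_H_succ x (n + 1), hq2]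
    linear_combination
      (q ^ 2 ^ n * aeval v (G n)) ^ 2 * hH + (x ^ 2 - x) * aeval x (H (n + 1)) ^ 2 * hG

lemma aeval_G_succ_eq_zero_of_rootMap {x : ℝ} {n : ℕ} (h : aeval (rootMap x) (G n) = 0) :
    aeval x (G (n + 1)) = 0 := by
  simpa [h] using (sq_aeval_rootMap x n).1.symm

lemma exists_roots_G (n : ℕ) :
    ∃ S : Finset ℝ, S.card = 2 ^ n ∧ ∀ x ∈ S, x ∈ Set.Ioo 0 1 ∧ aeval x (G n) = 0 := by
  induction n with
  | zero => exact ⟨{1 / 2}, rfl, by norm_num [G_zero, map_ofNat]⟩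
  | succ n ih =>
    obtain ⟨S, hcard, hS⟩ := ih
    set s : ℝ → ℝ := fun r => √((1 - r) / (1 + 3 * r))
    have hpos : ∀ r ∈ S, 0 < (1 - r) / (1 + 3 * r) := fun r hr =>
      div_pos (by linarith [(hS r hr).1.2]) (by linarith [(hS r hr).1.1])
    have hs : ∀ r ∈ S, s r ^ 2 = (1 - r) / (1 + 3 * r) := fun r hr => Real.sq_sqrt (hpos r hr).le
    have hden : ∀ r ∈ S, 0 < 1 + 3 * r := fun r hr => by linarith [(hS r hr).1.1]
    have ha : ∀ r ∈ S, rootMap ((1 + s r) / 2) = r := fun r hr =>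
      rootMap_one_add_div_two (hden r hr) (hs r hr)
    have hb : ∀ r ∈ S, rootMap ((1 + -s r) / 2) = r := fun r hr =>
      rootMap_one_add_div_two (hden r hr) (by rw [neg_sq, hs r hr])
    have hab : ∀ r ∈ S, (1 + s r) / 2 ≠ (1 + -s r) / 2 := fun r hr h => by
      have : 0 < s r := Real.sqrt_pos.2 (hpos r hr)
      linarith
    refine ⟨_, (card_biUnion_pair rootMap ha hb hab).trans (by rw [hcard, pow_succ, mul_comm]),
      fun x hx => ?_⟩
    have hx := hS _ (map_mem_of_mem_biUnion_pair ha hb hx)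
    exact ⟨mem_Ioo_of_rootMap_pos hx.1.1, aeval_G_succ_eq_zero_of_rootMap hx.2⟩

noncomputable def P (k : ℕ) : ℤ[X] := (G k).comp (X ^ 2)

lemma natDegree_P (k : ℕ) : (P k).natDegree = 2 ^ (k + 1) := by
  rw [P, natDegree_comp, (natDegree_and_leadingCoeff_G_H k).1, natDegree_X_pow, pow_succ]

lemma leadingCoeff_P (k : ℕ) : (P k).leadingCoeff = lcG k := by
  rw [P, leadingCoeff_comp (by rw [natDegree_X_pow]; norm_num), (monic_X_pow 2).leadingCoeff,
    one_pow, mul_one, (natDegree_and_leadingCoeff_G_H k).2.1]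

lemma degree_P (k : ℕ) : (P k).degree = (2 ^ (k + 1) : ℕ) := by
  rw [degree_eq_iff_natDegree_eq_of_pos (by positivity), natDegree_P]

lemma exists_roots_P (k : ℕ) :
    ∃ T : Finset ℝ, T.card = 2 ^ (k + 1) ∧ ∀ x ∈ T, x ∈ Set.Icc (-1) 1 ∧ aeval x (P k) = 0 := by
  obtain ⟨S, hcard, hS⟩ := exists_roots_G k
  have ha : ∀ r ∈ S, √r ^ 2 = r := fun r hr => Real.sq_sqrt (hS r hr).1.1.le
  have hb : ∀ r ∈ S, (-√r) ^ 2 = r := fun r hr => by rw [neg_sq, ha r hr]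
  have hab : ∀ r ∈ S, √r ≠ -√r := fun r hr h => by
    have : 0 < √r := Real.sqrt_pos.2 (hS r hr).1.1
    linarith
  refine ⟨_, (card_biUnion_pair (· ^ 2) ha hb hab).trans (by rw [hcard, pow_succ, mul_comm]),
    fun x hx => ?_⟩
  have hx := hS _ (map_mem_of_mem_biUnion_pair (φ := (· ^ 2)) ha hb hx)
  refine ⟨abs_le.1 (sq_le_one_iff_abs_le_one x |>.1 hx.1.2.le), ?_⟩
  rw [P, aeval_comp, aeval_X_pow]
  exact hx.2

lemma roots_map_P (k : ℕ) : ∃ T : Finset ℝ, (∀ x ∈ T, x ∈ Set.Icc (-1) 1) ∧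
    ((P k).map (Int.castRingHom ℂ)).roots = T.val.map (↑) := by
  obtain ⟨T, hcard, hT⟩ := exists_roots_P k
  refine ⟨T, fun x hx => (hT x hx).1, ?_⟩
  change _ = (T.map ⟨Complex.ofReal, Complex.ofReal_injective⟩).val
  refine roots_eq_of_degree_eq_card (fun z hz => ?_) ?_
  · obtain ⟨x, hx, rfl⟩ := Finset.mem_map.1 hz
    rw [← algebraMap_int_eq, eval_map_algebraMap, Function.Embedding.coeFn_mk,
      ← Complex.coe_algebraMap, aeval_algebraMap_apply, (hT x hx).2, map_zero]
  · rw [degree_map_eq_of_injective (RingHom.injective_int _), degree_P, Finset.card_map, hcard]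

lemma succ_le_mul_pow_of_le {a : ℕ → ℝ} (hpos : ∀ k, 0 < a k)
    (hconv : ∀ k, a (k + 2) * a k ^ 2 ≤ a (k + 1) ^ 3) {B : ℝ} {n : ℕ}
    (hn : a (n + 1) ≤ a n * B ^ 2 ^ (n + 1)) : ∀ k ≥ n, a (k + 1) ≤ a k * B ^ 2 ^ (k + 1) := by
  intro k hk
  induction k, hk using Nat.le_induction with
  | base => exact hn
  | succ k _ ih =>
    refine le_of_mul_le_mul_right ?_ (pow_pos (hpos k) 2)
    calc a (k + 2) * a k ^ 2 ≤ a (k + 1) * a (k + 1) ^ 2 := by rw [← pow_succ']; exact hconv k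
      _ ≤ a (k + 1) * (a k * B ^ 2 ^ (k + 1)) ^ 2 := by gcongr; exacts [(hpos _).le, (hpos _).le]
      _ = a (k + 1) * B ^ 2 ^ (k + 1 + 1) * a k ^ 2 := by rw [pow_succ 2 (k + 1), pow_mul]; ring

lemma le_pow_of_sq_le_succ {a : ℕ → ℝ} (hpos : ∀ k, 0 < a k) {B : ℝ} {k : ℕ}
    (hsq : a k ^ 2 ≤ a (k + 1)) (hk : a (k + 1) ≤ a k * B ^ 2 ^ (k + 1)) : a k ≤ B ^ 2 ^ (k + 1) :=
  le_of_mul_le_mul_left (by rw [← sq]; exact hsq.trans hk) (hpos k)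

lemma lcG_eighteen_le : (lcG 18 : ℝ) ≤ lcG 17 * 1.54170092 ^ 2 ^ 18 := by
  -- 17 is the least index for which this exact integer inequality holds.
  have h : lcG 18 * 10 ^ (8 * 2 ^ 18) ≤ lcG 17 * 154170092 ^ 2 ^ 18 := by decide +kernel
  rw [show (1.54170092 : ℝ) = 154170092 / 10 ^ 8 by norm_num, div_pow, ← pow_mul, mul_div_assoc',
    le_div_iff₀ (by positivity)]
  exact_mod_cast h

lemma lcG_le_pow (k : ℕ) (hk : 17 ≤ k) : (lcG k : ℝ) ≤ 1.54170092 ^ 2 ^ (k + 1) := by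
  have hpos : ∀ k, 0 < (lcG k : ℝ) := fun k => by exact_mod_cast lcG_pos k
  refine le_pow_of_sq_le_succ hpos (by exact_mod_cast sq_lcG_le_lcG_succ k) ?_
  exact succ_le_mul_pow_of_le hpos (fun k => by exact_mod_cast lcG_add_two_mul_sq_le k)
    lcG_eighteen_le k hk

end IntPolySegment

theorem stmt3 :
    ∃ (P : ℕ → Polynomial ℤ) (d : ℕ → ℕ),
      Tendsto d atTop atTop ∧
      (∀ k : ℕ, (P k).degree = d k) ∧
      (∀ k : ℕ, ((P k).map (Int.castRingHom ℂ)).roots.Nodup) ∧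
      (∀ k : ℕ, ∀ z ∈ ((P k).map (Int.castRingHom ℂ)).roots,
        ∃ x ∈ Set.Icc (-1 : ℝ) 1, z = (x : ℂ)) ∧
      liminf (fun k : ℕ => (|(P k).leadingCoeff| : ℝ) ^ ((d k : ℝ)⁻¹)) atTop
        ≤ (1.54170092 : ℝ) := by
  refine ⟨IntPolySegment.P, fun k => 2 ^ (k + 1), ?_, IntPolySegment.degree_P, fun k => ?_,
    fun k => ?_, ?_⟩
  · exact (tendsto_pow_atTop_atTop_of_one_lt one_lt_two).comp (tendsto_add_atTop_nat 1)
  · obtain ⟨T, -, hT⟩ := IntPolySegment.roots_map_P k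
    exact hT ▸ T.nodup.map Complex.ofReal_injective
  · obtain ⟨T, hmem, hT⟩ := IntPolySegment.roots_map_P k
    intro z hz
    obtain ⟨x, hx, rfl⟩ := Multiset.mem_map.1 (hT ▸ hz)
    exact ⟨x, hmem x hx, rfl⟩
  · refine liminf_le_of_frequently_le (Eventually.frequently ?_)
      (isBoundedUnder_of_eventually_ge (Eventually.of_forall fun k => by positivity))
    filter_upwards [eventually_ge_atTop 17] with k hk
    rw [IntPolySegment.leadingCoeff_P, Int.cast_natCast, Nat.abs_cast,
      Real.rpow_inv_le_iff_of_pos (by positivity) (by norm_num) (by positivity), Real.rpow_natCast]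
    exact IntPolySegment.lcG_le_pow k hk
end

section
/- Fix M > 0 and let D = {z ∈ ℂ : |z| ≤ 1}. Let P_n(z) = a_{n,n} ∏_{k=1}^n (z − α_{k,n}) ∈ ℤ[x] be a polynomial of exact degree n with |a_{n,n}| ≤ M and all complex zeros α_{1,n}, …, α_{n,n} simple and lying in D. Then for every integer m ≥ 1 and every n with n ≥ M and n ≥ 55, the power sums s_m := Σ_{k=1}^n α_{k,n}^m satisfy |s_m| ≤ (24m + 16) √(n log n). -/
open Polynomial Finset ComplexConjugate

/-!
Let `S` be the set of roots and `a` the leading coefficient. For `0 ≤ t < 1`, expanding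
`-log (1 - u) = ∑ uᵏ / k` at `u = t z w̄` gives
`∑_{z,w ∈ S} -log ‖1 - t z w̄‖ = ∑_k tᵏ ‖s_k‖² / k ≥ tᵐ ‖s_m‖² / m`.
The diagonal terms are at most `log (1/(1-t))` and, since
`‖1 - t z w̄‖² - t ‖z - w‖² = (1 - t‖z‖²)(1 - t‖w‖²) ≥ 0`, an off-diagonal term is at most
`-½ log t - log ‖z - w‖`. The sum of `-log ‖z - w‖` over pairs of distinct roots is controlled by
arithmetic: `a^(2n-1) ∏_{z ≠ w} (z - w)` is the resultant of `P` and `P'`, a nonzero integer, so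
it is at most `(2n-1) log |a| ≤ 2 n log n`. Taking `t = 1 - 1/n` gives `‖s_m‖² ≤ 8 m n log n`
when `2m ≤ n`; otherwise the trivial bound `‖s_m‖ ≤ n < 2m` suffices.
-/

theorem Polynomial.resultant_derivative_C_mul_prod_X_sub_C {R : Type*} [CommRing R]
    [Nontrivial R] [DecidableEq R] (a : R) (S : Finset R) :
    (C a * ∏ z ∈ S, (X - C z)).resultant (derivative (C a * ∏ z ∈ S, (X - C z))) #S (#S - 1)
      = a ^ (2 * #S - 1) * ∏ z ∈ S, ∏ w ∈ S.erase z, (z - w) := by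
  set f := C a * ∏ z ∈ S, (X - C z)
  have hdeg : (∏ z ∈ S, (X - C z)).natDegree = #S := by
    rw [natDegree_prod_of_monic _ _ fun z _ => monic_X_sub_C z]
    simp
  have hder : (derivative f).natDegree ≤ #S - 1 :=
    (natDegree_derivative_le _).trans (Nat.sub_le_sub_right
      ((natDegree_C_mul_le _ _).trans hdeg.le) 1)
  have heval (z : R) (hz : z ∈ S) : eval z (derivative f) = a * ∏ w ∈ S.erase z, (z - w) := by
    rw [derivative_C_mul, eval_mul, eval_C, prod_eq_multiset_prod,
      eval_multiset_prod_X_sub_C_derivative (S := S.val) hz, prod_eq_multiset_prod, erase_val]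
  have hprod := resultant_prod_left S (fun z => X - C z) (derivative f) (#S - 1) (by simp) hder
  rw [hdeg] at hprod
  rw [resultant_C_mul_left, hprod]
  simp only [resultant_X_sub_C_left _ _ _ hder, natDegree_X_sub_C]
  rw [prod_congr rfl heval, prod_mul_distrib, prod_const, ← mul_assoc, ← pow_add]
  congr 2
  omega

theorem Polynomial.card_toFinset_roots_map_intCast {P : ℤ[X]}
    (hnd : (P.map (Int.castRingHom ℂ)).roots.Nodup) :
    #(P.map (Int.castRingHom ℂ)).roots.toFinset = P.natDegree := by
  rw [Multiset.toFinset_card_of_nodup hnd, IsAlgClosed.card_roots_eq_natDegree,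
    natDegree_map_eq_of_injective (RingHom.injective_int _)]

theorem Polynomial.one_le_abs_leadingCoeff_pow_mul_prod_norm_sub_roots {P : ℤ[X]} (hP : P ≠ 0)
    (hnd : (P.map (Int.castRingHom ℂ)).roots.Nodup) :
    1 ≤ |(P.leadingCoeff : ℝ)| ^ (2 * P.natDegree - 1) *
      ∏ z ∈ (P.map (Int.castRingHom ℂ)).roots.toFinset,
        ∏ w ∈ (P.map (Int.castRingHom ℂ)).roots.toFinset.erase z, ‖z - w‖ := by
  set F := P.map (Int.castRingHom ℂ)
  set S := F.roots.toFinset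
  have hS : S.val = F.roots := hnd.dedup
  have hF : C (P.leadingCoeff : ℂ) * ∏ z ∈ S, (X - C z) = F := by
    conv_rhs => rw [← C_leadingCoeff_mul_prod_multiset_X_sub_C
      (IsAlgClosed.card_roots_eq_natDegree (p := F))]
    rw [prod_eq_multiset_prod, hS, leadingCoeff_map_of_injective (RingHom.injective_int _)]
    rfl
  have hres : ((P.resultant (derivative P) P.natDegree (P.natDegree - 1) : ℤ) : ℂ)
      = (P.leadingCoeff : ℂ) ^ (2 * P.natDegree - 1) * ∏ z ∈ S, ∏ w ∈ S.erase z, (z - w) := by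
    rw [← card_toFinset_roots_map_intCast hnd, ← resultant_derivative_C_mul_prod_X_sub_C, hF,
      derivative_map, resultant_map_map]
    rfl
  have hne : P.resultant (derivative P) P.natDegree (P.natDegree - 1) ≠ 0 := by
    rw [← Int.cast_ne_zero (α := ℂ), hres]
    refine mul_ne_zero (pow_ne_zero _ (by exact_mod_cast leadingCoeff_ne_zero.mpr hP)) ?_
    exact prod_ne_zero_iff.mpr fun z _ => prod_ne_zero_iff.mpr fun w hw =>
      sub_ne_zero.mpr (ne_of_mem_erase hw).symm
  calc (1 : ℝ) ≤ ‖((P.resultant (derivative P) P.natDegree (P.natDegree - 1) : ℤ) : ℂ)‖ := by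
        rw [Complex.norm_intCast]; exact_mod_cast Int.one_le_abs hne
    _ = _ := by simp [hres, norm_prod]

noncomputable def logEnergy (S : Finset ℂ) : ℝ := ∑ z ∈ S, ∑ w ∈ S.erase z, -Real.log ‖z - w‖

theorem logEnergy_roots_le {P : ℤ[X]} (hP : P ≠ 0)
    (hnd : (P.map (Int.castRingHom ℂ)).roots.Nodup) :
    logEnergy (P.map (Int.castRingHom ℂ)).roots.toFinset
      ≤ 2 * P.natDegree * Real.log |(P.leadingCoeff : ℝ)| := by
  set S := (P.map (Int.castRingHom ℂ)).roots.toFinset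
  have hdist (z : ℂ) (w : ℂ) (hw : w ∈ S.erase z) : ‖z - w‖ ≠ 0 :=
    norm_ne_zero_iff.mpr (sub_ne_zero.mpr (ne_of_mem_erase hw).symm)
  have ha : 1 ≤ |(P.leadingCoeff : ℝ)| := by
    exact_mod_cast Int.one_le_abs (leadingCoeff_ne_zero.mpr hP)
  have h := Real.log_nonneg (one_le_abs_leadingCoeff_pow_mul_prod_norm_sub_roots hP hnd)
  rw [Real.log_mul (by positivity) (prod_ne_zero_iff.mpr fun z _ => prod_ne_zero_iff.mpr
      (hdist z)), Real.log_pow, Real.log_prod fun z _ => prod_ne_zero_iff.mpr (hdist z)] at h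
  simp only [Real.log_prod (hdist _)] at h
  have hdeg : ((2 * P.natDegree - 1 : ℕ) : ℝ) ≤ 2 * P.natDegree := by
    exact_mod_cast Nat.sub_le _ _
  have := mul_le_mul_of_nonneg_right hdeg (Real.log_nonneg ha)
  simp only [logEnergy, sum_neg_distrib]
  linarith

theorem sum_sum_pow_mul_conj_div (S : Finset ℂ) (t : ℝ) (k : ℕ) :
    ∑ z ∈ S, ∑ w ∈ S, (t * z * conj w) ^ k / k = ((t ^ k * ‖∑ z ∈ S, z ^ k‖ ^ 2 / k : ℝ) : ℂ) := by
  simp_rw [← sum_div, mul_pow, ← map_pow]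
  push_cast
  rw [← Complex.mul_conj', map_sum, sum_mul_sum, mul_sum]
  refine congrArg (· / _) (sum_congr rfl fun z _ => ?_)
  rw [mul_sum]
  exact sum_congr rfl fun w _ => by ring

theorem neg_log_one_sub_inv_le {N : ℝ} (hN : 2 ≤ N) : -Real.log (1 - 1 / N) ≤ 2 / N := by
  have hinv : (1 - 1 / N)⁻¹ = 1 + 1 / (N - 1) := by
    have : N - 1 ≠ 0 := by linarith
    field_simp; ring
  have h := Real.one_sub_inv_le_log_of_pos (show 0 < 1 - 1 / N by
    rw [sub_pos, div_lt_one (by linarith)]; linarith)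
  have : 1 / (N - 1) ≤ 2 / N := by
    rw [div_le_div_iff₀ (by linarith) (by linarith)]; linarith
  linarith

section Energy

variable {S : Finset ℂ} {t : ℝ}

theorem hasSum_pow_mul_sq_norm_sum_pow_div (hS : ∀ z ∈ S, ‖z‖ ≤ 1) (ht0 : 0 ≤ t) (ht1 : t < 1) :
    HasSum (fun k : ℕ => t ^ k * ‖∑ z ∈ S, z ^ k‖ ^ 2 / k)
      (∑ z ∈ S, ∑ w ∈ S, -Real.log ‖1 - t * z * conj w‖) := by
  have hlt (z w : ℂ) (hz : z ∈ S) (hw : w ∈ S) : ‖(t : ℂ) * z * conj w‖ < 1 := by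
    rw [norm_mul, norm_mul, Complex.norm_conj, Complex.norm_real, Real.norm_of_nonneg ht0]
    calc t * ‖z‖ * ‖w‖ ≤ t * 1 * 1 := by gcongr <;> simp [hS z hz, hS w hw]
      _ < 1 := by linarith
  have hsum := hasSum_sum fun z hz => hasSum_sum fun w hw =>
    Complex.hasSum_taylorSeries_neg_log (hlt z w hz hw)
  simpa only [sum_sum_pow_mul_conj_div, Complex.ofReal_re, Complex.re_sum, Complex.neg_re,
    Complex.log_re] using Complex.hasSum_re hsum

theorem one_sub_le_norm_one_sub_mul_conj_self {z : ℂ} (hz : ‖z‖ ≤ 1) (ht0 : 0 ≤ t) :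
    1 - t ≤ ‖1 - t * z * conj z‖ := by
  rw [mul_assoc, Complex.mul_conj, ← Complex.ofReal_mul, ← Complex.ofReal_one,
    ← Complex.ofReal_sub, Complex.norm_real, Complex.normSq_eq_norm_sq]
  have : ‖z‖ ^ 2 ≤ 1 := pow_le_one₀ (norm_nonneg z) hz
  calc 1 - t ≤ 1 - t * ‖z‖ ^ 2 := by nlinarith
    _ ≤ ‖1 - t * ‖z‖ ^ 2‖ := Real.le_norm_self _

theorem mul_sq_norm_sub_le_sq_norm_one_sub_mul_conj {z w : ℂ} (hz : ‖z‖ ≤ 1) (hw : ‖w‖ ≤ 1)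
    (ht1 : t ≤ 1) :
    t * ‖z - w‖ ^ 2 ≤ ‖1 - t * z * conj w‖ ^ 2 := by
  have hz' : t * Complex.normSq z ≤ 1 := by
    rw [Complex.normSq_eq_norm_sq]; nlinarith [pow_le_one₀ (n := 2) (norm_nonneg z) hz]
  have hw' : t * Complex.normSq w ≤ 1 := by
    rw [Complex.normSq_eq_norm_sq]; nlinarith [pow_le_one₀ (n := 2) (norm_nonneg w) hw]
  have key : Complex.normSq (1 - t * z * conj w) - t * Complex.normSq (z - w)
      = (1 - t * Complex.normSq z) * (1 - t * Complex.normSq w) := by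
    simp only [Complex.normSq_apply, Complex.sub_re, Complex.sub_im, Complex.mul_re,
      Complex.mul_im, Complex.one_re, Complex.one_im, Complex.conj_re, Complex.conj_im,
      Complex.ofReal_re, Complex.ofReal_im]
    ring
  rw [← Complex.normSq_eq_norm_sq, ← Complex.normSq_eq_norm_sq]
  nlinarith [mul_nonneg (sub_nonneg.mpr hz') (sub_nonneg.mpr hw')]

theorem sum_sum_neg_log_norm_one_sub_mul_conj_le (hS : ∀ z ∈ S, ‖z‖ ≤ 1) (ht0 : 0 < t)
    (ht1 : t < 1) :
    ∑ z ∈ S, ∑ w ∈ S, -Real.log ‖1 - t * z * conj w‖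
      ≤ #S * -Real.log (1 - t) + #S ^ 2 * (-Real.log t / 2) + logEnergy S := by
  have hdiag (z : ℂ) (hz : z ∈ S) : -Real.log ‖1 - t * z * conj z‖ ≤ -Real.log (1 - t) :=
    neg_le_neg <| Real.log_le_log (by linarith) <|
      one_sub_le_norm_one_sub_mul_conj_self (hS z hz) ht0.le
  have hoff (z w : ℂ) (hz : z ∈ S) (hw : w ∈ S.erase z) :
      -Real.log ‖1 - t * z * conj w‖ ≤ -Real.log t / 2 + -Real.log ‖z - w‖ := by
    have hzw : 0 < ‖z - w‖ := norm_pos_iff.mpr (sub_ne_zero.mpr (ne_of_mem_erase hw).symm)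
    have h := Real.log_le_log (by positivity) (mul_sq_norm_sub_le_sq_norm_one_sub_mul_conj
      (hS z hz) (hS w (mem_of_mem_erase hw)) ht1.le)
    rw [Real.log_mul ht0.ne' (by positivity), Real.log_pow, Real.log_pow] at h
    push_cast at h
    linarith
  have hlogt : 0 ≤ -Real.log t / 2 := by
    have := Real.log_nonpos ht0.le ht1.le
    linarith
  calc ∑ z ∈ S, ∑ w ∈ S, -Real.log ‖1 - t * z * conj w‖
      = ∑ z ∈ S, (-Real.log ‖1 - t * z * conj z‖ +
          ∑ w ∈ S.erase z, -Real.log ‖1 - t * z * conj w‖) :=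
        sum_congr rfl fun z hz => (add_sum_erase S _ hz).symm
    _ ≤ ∑ z ∈ S, (-Real.log (1 - t) +
          ∑ w ∈ S.erase z, (-Real.log t / 2 + -Real.log ‖z - w‖)) :=
        sum_le_sum fun z hz => add_le_add (hdiag z hz) (sum_le_sum (hoff z · hz))
    _ ≤ ∑ z ∈ S, (-Real.log (1 - t) +
          (∑ _w ∈ S, -Real.log t / 2 + ∑ w ∈ S.erase z, -Real.log ‖z - w‖)) := by
        gcongr with z hz
        rw [sum_add_distrib]
        exact add_le_add_left
          (sum_le_sum_of_subset_of_nonneg (erase_subset z S) fun _ _ _ => hlogt) _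
    _ = #S * -Real.log (1 - t) + #S ^ 2 * (-Real.log t / 2) + logEnergy S := by
        simp only [sum_add_distrib, sum_const, nsmul_eq_mul, logEnergy]
        ring

theorem sum_sum_neg_log_norm_one_sub_mul_conj_le_of_logEnergy_le (hS : ∀ z ∈ S, ‖z‖ ≤ 1)
    (hcard : 3 ≤ #S) (hE : logEnergy S ≤ 2 * #S * Real.log #S) :
    ∑ z ∈ S, ∑ w ∈ S, -Real.log ‖1 - (1 - 1 / #S : ℝ) * z * conj w‖
      ≤ 4 * (#S * Real.log #S) := by
  have hN : (3 : ℝ) ≤ #S := by exact_mod_cast hcard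
  set N : ℝ := (#S : ℝ)
  have hlogN : 1 ≤ Real.log N := by
    rw [Real.le_log_iff_exp_le (by linarith)]
    linarith [Real.exp_one_lt_d9]
  have ht0 : 0 < 1 - 1 / N := by rw [sub_pos, div_lt_one (by linarith)]; linarith
  have ht1 : 1 - 1 / N < 1 := by linarith [one_div_pos.mpr (show 0 < N by linarith)]
  have hdiag : -Real.log (1 - (1 - 1 / N)) = Real.log N := by
    rw [sub_sub_cancel, one_div, Real.log_inv, neg_neg]
  have hoff : N ^ 2 * (-Real.log (1 - 1 / N) / 2) ≤ N := by
    have := mul_le_mul_of_nonneg_left (neg_log_one_sub_inv_le (N := N) (by linarith)) (sq_nonneg N)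
    rw [show N ^ 2 * (2 / N) = 2 * N by field_simp] at this
    linarith
  have := sum_sum_neg_log_norm_one_sub_mul_conj_le hS ht0 ht1
  rw [hdiag] at this
  nlinarith

theorem sq_norm_sum_pow_le (hS : ∀ z ∈ S, ‖z‖ ≤ 1) (hcard : 3 ≤ #S)
    (hE : logEnergy S ≤ 2 * #S * Real.log #S) {m : ℕ} (hm : 0 < m) (hmS : 2 * m ≤ #S) :
    ‖∑ z ∈ S, z ^ m‖ ^ 2 ≤ 8 * m * (#S * Real.log #S) := by
  have hN : (3 : ℝ) ≤ #S := by exact_mod_cast hcard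
  have hmN : (m : ℝ) * 2 ≤ #S := by exact_mod_cast (mul_comm 2 m ▸ hmS)
  set t : ℝ := 1 - 1 / #S
  have ht0 : 0 < t := by rw [sub_pos, div_lt_one (by linarith)]; linarith
  have ht1 : t < 1 := by linarith [one_div_pos.mpr (show (0 : ℝ) < #S by linarith)]
  have htm : 1 / 2 ≤ t ^ m := by
    have h := one_add_mul_le_pow (a := -(1 / (#S : ℝ))) (by
      rw [neg_le_neg_iff, div_le_iff₀ (by linarith)]; linarith) m
    have : (m : ℝ) * (1 / #S) ≤ 1 / 2 := by
      rw [mul_one_div, div_le_iff₀ (by linarith)]; linarith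
    rw [← sub_eq_add_neg] at h
    linarith
  have henergy := (le_hasSum (hasSum_pow_mul_sq_norm_sum_pow_div hS ht0.le ht1) m
    fun k _ => by positivity).trans
      (sum_sum_neg_log_norm_one_sub_mul_conj_le_of_logEnergy_le hS hcard hE)
  rw [div_le_iff₀ (by exact_mod_cast hm)] at henergy
  nlinarith [sq_nonneg ‖∑ z ∈ S, z ^ m‖]

theorem norm_sum_pow_le_card (hS : ∀ z ∈ S, ‖z‖ ≤ 1) (m : ℕ) : ‖∑ z ∈ S, z ^ m‖ ≤ #S := by
  calc ‖∑ z ∈ S, z ^ m‖ ≤ ∑ z ∈ S, ‖z‖ ^ m := by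
        simpa only [norm_pow] using norm_sum_le S fun z => z ^ m
    _ ≤ ∑ _z ∈ S, (1 : ℝ) := sum_le_sum fun z hz => pow_le_one₀ (norm_nonneg z) (hS z hz)
    _ = #S := by simp

theorem norm_sum_pow_le_mul_sqrt (hS : ∀ z ∈ S, ‖z‖ ≤ 1) (hcard : 3 ≤ #S)
    (hE : logEnergy S ≤ 2 * #S * Real.log #S) {m : ℕ} (hm : 0 < m) :
    ‖∑ z ∈ S, z ^ m‖ ≤ (24 * m + 16) * Real.sqrt (#S * Real.log #S) := by
  have hN : (3 : ℝ) ≤ #S := by exact_mod_cast hcard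
  have hlogN : 1 ≤ Real.log #S := by
    rw [Real.le_log_iff_exp_le (by positivity)]
    linarith [Real.exp_one_lt_d9]
  by_cases hmS : 2 * m ≤ #S
  · calc ‖∑ z ∈ S, z ^ m‖ ≤ Real.sqrt (8 * m * (#S * Real.log #S)) :=
          Real.le_sqrt_of_sq_le (sq_norm_sum_pow_le hS hcard hE hm hmS)
      _ = Real.sqrt (8 * m) * Real.sqrt (#S * Real.log #S) := Real.sqrt_mul (by positivity) _
      _ ≤ (24 * m + 16) * Real.sqrt (#S * Real.log #S) := by
        gcongr
        rw [Real.sqrt_le_left (by positivity)]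
        nlinarith
  · have hSm : (#S : ℝ) < 2 * m := by exact_mod_cast not_le.mp hmS
    calc ‖∑ z ∈ S, z ^ m‖ ≤ #S := norm_sum_pow_le_card hS m
      _ ≤ (24 * m + 16) * 1 := by linarith
      _ ≤ (24 * m + 16) * Real.sqrt (#S * Real.log #S) := by
        gcongr
        rw [Real.one_le_sqrt]
        nlinarith

end Energy

theorem stmt10_general (M : ℝ) (n : ℕ) (hnM : M ≤ (n : ℝ)) (hn : 55 ≤ n)
    (m : ℕ) (hm : 1 ≤ m)
    (P : Polynomial ℤ)
    (hdeg : P.degree = n)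
    (hlead : (|P.leadingCoeff| : ℝ) ≤ M)
    (hsimple : (P.map (Int.castRingHom ℂ)).roots.Nodup)
    (hzeros : ∀ z ∈ (P.map (Int.castRingHom ℂ)).roots, ‖z‖ ≤ 1) :
    ‖((P.map (Int.castRingHom ℂ)).roots.map (fun z => z ^ m)).sum‖
      ≤ (24 * m + 16) * Real.sqrt (n * Real.log n) := by
  set S := (P.map (Int.castRingHom ℂ)).roots.toFinset
  have hP : P ≠ 0 := by rintro rfl; simp at hdeg
  have hnat : P.natDegree = n := natDegree_eq_of_degree_eq_some hdeg
  have hcard : #S = n := hnat ▸ card_toFinset_roots_map_intCast hsimple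
  have hE : logEnergy S ≤ 2 * #S * Real.log #S := by
    refine (logEnergy_roots_le hP hsimple).trans ?_
    have ha : 0 < |(P.leadingCoeff : ℝ)| := by
      exact_mod_cast abs_pos.mpr (leadingCoeff_ne_zero.mpr hP)
    rw [hcard, hnat]
    gcongr
    exact hlead.trans hnM
  have hS : S.val = (P.map (Int.castRingHom ℂ)).roots := hsimple.dedup
  have h3 : 3 ≤ #S := by omega
  rw [← hS, ← sum_eq_multiset_sum, ← hcard]
  exact norm_sum_pow_le_mul_sqrt (fun z hz => hzeros z (Multiset.mem_toFinset.mp hz)) h3 hE hm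

theorem stmt10 (M : ℝ) (hM : 0 < M) (n : ℕ) (hnM : M ≤ (n : ℝ)) (hn : 55 ≤ n)
    (m : ℕ) (hm : 1 ≤ m)
    (P : Polynomial ℤ)
    (hdeg : P.degree = n)
    (hlead : (|P.leadingCoeff| : ℝ) ≤ M)
    (hsimple : (P.map (Int.castRingHom ℂ)).roots.Nodup)
    (hzeros : ∀ z ∈ (P.map (Int.castRingHom ℂ)).roots, ‖z‖ ≤ 1) :
    ‖((P.map (Int.castRingHom ℂ)).roots.map (fun z => z ^ m)).sum‖
      ≤ (24 * m + 16) * Real.sqrt (n * Real.log n) :=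
  stmt10_general M n hnM hn m hm P hdeg hlead hsimple hzeros
end

section
/- Let [a,b] ⊂ ℝ with b − a ≥ 4. Then every nonzero polynomial P ∈ ℤ[x] satisfies ‖P‖_{[a,b]} ≥ 1; consequently the integer Chebyshev constant satisfies t_ℤ([a,b]) = 1. -/
/-!
Rescale a polynomial from `[a,b]` to `[-1,1]`. Chebyshev's extremal property bounds the leading
coefficient of a polynomial of degree `n` with `|p| ≤ M` on `[a,b]`:
`|lc p| * ((b - a) / 2) ^ n ≤ 2 ^ (n - 1) * M`. An integer polynomial has `|lc p| ≥ 1`, and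
`b - a ≥ 4` makes the left side at least `2 ^ n`, so `M ≥ 2`, or `M ≥ 1` when `n = 0`.
Since `‖1‖ = 1`, each infimum in the definition of `t_ℤ` is then exactly `1`.
-/

open Filter Polynomial

/-- The uniform (sup) norm of an integer polynomial on the segment `[a,b]`. -/
noncomputable def supNorm (a b : ℝ) (f : Polynomial ℤ) : ℝ :=
  sSup ((fun x => |(f.map (Int.castRingHom ℝ)).eval x|) '' Set.Icc a b)

/-- The integer Chebyshev constant of the segment `[a,b]`. -/
noncomputable def intChebyshev (a b : ℝ) : ℝ :=
  limsup (fun m : ℕ =>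
    (sInf {r : ℝ | ∃ R : Polynomial ℤ, R ≠ 0 ∧ R.natDegree ≤ m ∧ r = supNorm a b R})
      ^ ((m : ℝ)⁻¹)) atTop

theorem Polynomial.abs_leadingCoeff_mul_pow_le_of_forall_abs_le (p : ℝ[X]) {a b M : ℝ}
    (hab : a < b) (hM : 0 < M) (hbound : ∀ x ∈ Set.Icc a b, |p.eval x| ≤ M) :
    |p.leadingCoeff| * ((b - a) / 2) ^ p.natDegree ≤ 2 ^ (p.natDegree - 1) * M := by
  set n := p.natDegree
  set ℓ : ℝ[X] := C ((b - a) / 2) * X + C ((a + b) / 2)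
  have hℓ : ℓ.natDegree = 1 := natDegree_linear (by linarith)
  set Q : ℝ[X] := C M⁻¹ * p.comp ℓ
  have hQdeg : Q.degree ≤ n := by
    refine degree_le_of_natDegree_le ((natDegree_C_mul_le _ _).trans ?_)
    simpa [hℓ] using natDegree_comp_le (p := p) (q := ℓ)
  have hQcoeff : Q.coeff n = M⁻¹ * (p.leadingCoeff * ((b - a) / 2) ^ n) := by
    have := coeff_comp_degree_mul_degree (p := p) (hℓ.symm ▸ one_ne_zero : ℓ.natDegree ≠ 0)
    rw [hℓ, mul_one, leadingCoeff_linear (by linarith)] at this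
    rw [coeff_C_mul, this]
  have hQbound : ∀ y ∈ Set.Icc (-1 : ℝ) 1, |Q.eval y| ≤ 1 := by
    intro y ⟨hy₁, hy₂⟩
    have hx : ℓ.eval y ∈ Set.Icc a b := by
      simp only [ℓ, eval_add, eval_mul, eval_C, eval_X]
      constructor <;> nlinarith
    rw [eval_mul, eval_C, eval_comp, abs_mul, abs_of_pos (inv_pos.2 hM), inv_mul_le_iff₀ hM,
      mul_one]
    exact hbound _ hx
  have hupper := Chebyshev.coeff_le_of_forall_abs_le_one hQdeg hQbound
  have hlower := Chebyshev.coeff_le_of_forall_abs_le_one (P := -Q) (by rwa [degree_neg])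
    (fun y hy => by simpa using hQbound y hy)
  rw [coeff_neg] at hlower
  have habs : |Q.coeff n| ≤ 2 ^ (n - 1) := abs_le.2 ⟨by linarith, hupper⟩
  rwa [hQcoeff, abs_mul, abs_of_pos (inv_pos.2 hM), inv_mul_le_iff₀ hM, mul_comm M, abs_mul,
    abs_of_pos (by positivity : (0 : ℝ) < ((b - a) / 2) ^ n)] at habs

theorem abs_eval_le_supNorm (a b : ℝ) (P : ℤ[X]) {x : ℝ} (hx : x ∈ Set.Icc a b) :
    |(P.map (Int.castRingHom ℝ)).eval x| ≤ supNorm a b P :=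
  le_csSup (isCompact_Icc.image (continuous_abs.comp (Polynomial.continuous _))).bddAbove
    ⟨x, hx, rfl⟩

theorem one_le_supNorm {a b : ℝ} (hlen : 4 ≤ b - a) {P : ℤ[X]} (hP : P ≠ 0) :
    1 ≤ supNorm a b P := by
  by_contra! hlt
  set p := P.map (Int.castRingHom ℝ)
  set n := P.natDegree
  have hpn : p.natDegree = n := natDegree_map_eq_of_injective Int.cast_injective P
  have hc : 1 ≤ |p.leadingCoeff| := by
    rw [leadingCoeff_map_of_injective Int.cast_injective, eq_intCast, ← Int.cast_abs]
    exact_mod_cast Int.one_le_abs (leadingCoeff_ne_zero.2 hP)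
  have hM₀ : 0 ≤ supNorm a b P := (abs_nonneg _).trans (abs_eval_le_supNorm a b P
    (Set.left_mem_Icc.2 (by linarith : a ≤ b)))
  obtain ⟨M, hM₁, hM₂⟩ := exists_between hlt
  have hbound : ∀ x ∈ Set.Icc a b, |p.eval x| ≤ M :=
    fun x hx => (abs_eval_le_supNorm a b P hx).trans hM₁.le
  have hcheb := p.abs_leadingCoeff_mul_pow_le_of_forall_abs_le (by linarith) (by linarith) hbound
  rw [hpn] at hcheb
  have h2 : (0 : ℝ) < 2 ^ (n - 1) := by positivity
  refine lt_irrefl ((2 : ℝ) ^ n) ?_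
  calc (2 : ℝ) ^ n ≤ ((b - a) / 2) ^ n := pow_le_pow_left₀ (by norm_num) (by linarith) n
    _ ≤ |p.leadingCoeff| * ((b - a) / 2) ^ n := le_mul_of_one_le_left (by positivity) hc
    _ ≤ 2 ^ (n - 1) * M := hcheb
    _ < 2 ^ (n - 1) := mul_lt_of_lt_one_right h2 (by linarith)
    _ ≤ 2 ^ n := pow_le_pow_right₀ (by norm_num) (Nat.sub_le n 1)

theorem supNorm_one {a b : ℝ} (hab : a ≤ b) : supNorm a b 1 = 1 := by
  simp [_root_.supNorm, (Set.nonempty_Icc.2 hab).image_const]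

theorem intChebyshev_eq_one {a b : ℝ} (hab : a ≤ b)
    (h : ∀ P : ℤ[X], P ≠ 0 → 1 ≤ supNorm a b P) : intChebyshev a b = 1 := by
  have hinf : ∀ m : ℕ,
      sInf {r : ℝ | ∃ R : ℤ[X], R ≠ 0 ∧ R.natDegree ≤ m ∧ r = supNorm a b R} = 1 := by
    intro m
    refine IsLeast.csInf_eq ⟨⟨1, one_ne_zero, by simp, (supNorm_one hab).symm⟩, ?_⟩
    rintro r ⟨R, hR, -, rfl⟩
    exact h R hR
  simp only [intChebyshev, hinf, Real.one_rpow, limsup_const]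

theorem stmt14 (a b : ℝ) (hlen : 4 ≤ b - a) :
    (∀ P : Polynomial ℤ, P ≠ 0 → 1 ≤ supNorm a b P) ∧ intChebyshev a b = 1 := by
  have h : ∀ P : ℤ[X], P ≠ 0 → 1 ≤ supNorm a b P := fun _ => one_le_supNorm hlen
  exact ⟨h, intChebyshev_eq_one (by linarith) h⟩
end

section
/- Fix an integer m ≥ 1 and define φ: ℂ → ℝ by φ(z) = Re(z^m) if |z| ≤ 1; φ(z) = Re(z^m) · (m + 1 − m|z|) if 1 ≤ |z| ≤ 1 + 1/m; and φ(z) = 0 if |z| ≥ 1 + 1/m. Then φ is Lipschitz with constant 8m: for all z, t ∈ ℂ, |φ(z) − φ(t)| ≤ 8m |z − t|. -/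
/-!
Write `φ(z) = Re(z ^ m) · χ(‖z‖)`, where `χ(r) = max 0 (min 1 (m + 1 - m r))` is a cutoff that is
`m`-Lipschitz, takes values in `[0, 1]` and vanishes for `r ≥ R := 1 + 1/m`. If `‖z‖ ≤ R`, split
`φ(z) - φ(t) = Re(z ^ m) (χ(‖z‖) - χ(‖t‖)) + (Re(z ^ m) - Re(t ^ m)) χ(‖t‖)`.
Both terms are at most `m R ^ m ‖z - t‖ ≤ e m ‖z - t‖`, since `‖z ^ m - t ^ m‖ ≤ m R ^ (m - 1) ‖z - t‖`
on the ball of radius `R` and `(1 + 1/m) ^ m ≤ e`. If both points lie outside that ball, `φ`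
vanishes at both.
-/

open Real

theorem norm_pow_sub_pow_le {𝕜 : Type*} [NormedCommRing 𝕜] [NormOneClass 𝕜] (a b : 𝕜) (n : ℕ) :
    ‖a ^ n - b ^ n‖ ≤ ‖a - b‖ * n * max ‖a‖ ‖b‖ ^ (n - 1) := by
  set M := max ‖a‖ ‖b‖
  have hterm : ∀ i ∈ Finset.range n, ‖a ^ i * b ^ (n - 1 - i)‖ ≤ M ^ (n - 1) := fun i hi =>
    calc ‖a ^ i * b ^ (n - 1 - i)‖ ≤ ‖a‖ ^ i * ‖b‖ ^ (n - 1 - i) :=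
          (norm_mul_le _ _).trans (by gcongr <;> exact norm_pow_le _ _)
      _ ≤ M ^ i * M ^ (n - 1 - i) := by gcongr <;> simp [M]
      _ = M ^ (n - 1) := by rw [← pow_add]; congr 1; grind
  calc ‖a ^ n - b ^ n‖ = ‖(∑ i ∈ Finset.range n, a ^ i * b ^ (n - 1 - i)) * (a - b)‖ := by
        rw [geom_sum₂_mul]
    _ ≤ (∑ i ∈ Finset.range n, ‖a ^ i * b ^ (n - 1 - i)‖) * ‖a - b‖ := by
        grw [norm_mul_le, norm_sum_le]
    _ ≤ (n * M ^ (n - 1)) * ‖a - b‖ := by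
        grw [Finset.sum_le_sum hterm]
        simp
    _ = ‖a - b‖ * n * M ^ (n - 1) := by ring

noncomputable def cutoff (c r : ℝ) : ℝ := max 0 (min 1 (c + 1 - c * r))

namespace cutoff

theorem nonneg (c r : ℝ) : 0 ≤ cutoff c r := le_max_left _ _

theorem le_one (c r : ℝ) : cutoff c r ≤ 1 := max_le zero_le_one (min_le_left _ _)

theorem abs_sub_le (c a b : ℝ) : |cutoff c a - cutoff c b| ≤ |c| * |a - b| :=
  calc |cutoff c a - cutoff c b|
      ≤ |min 1 (c + 1 - c * a) - min 1 (c + 1 - c * b)| := by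
        rw [cutoff, cutoff, max_comm 0, max_comm 0]
        exact abs_max_sub_max_le_abs _ _ _
    _ ≤ |(c + 1 - c * a) - (c + 1 - c * b)| := by
        simpa using abs_min_sub_min_le_max (1 : ℝ) (c + 1 - c * a) 1 (c + 1 - c * b)
    _ = |c| * |a - b| := by
        rw [show c + 1 - c * a - (c + 1 - c * b) = c * (b - a) by ring, abs_mul, abs_sub_comm]

theorem eq_zero {c r : ℝ} (hc : 0 < c) (hr : 1 + 1 / c ≤ r) : cutoff c r = 0 := by
  have h : c + 1 - c * r ≤ 0 := by
    have := mul_le_mul_of_nonneg_left hr hc.le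
    rw [mul_add, mul_one_div_cancel hc.ne'] at this
    linarith
  rw [cutoff, min_eq_right (h.trans zero_le_one), max_eq_left h]

theorem mul_eq_ite {c : ℝ} (hc : 0 < c) (x r : ℝ) :
    x * cutoff c r =
      if r ≤ 1 then x else if r ≤ 1 + 1 / c then x * (c + 1 - c * r) else 0 := by
  have hcr : c * (1 + 1 / c) = c + 1 := by rw [mul_add, mul_one_div_cancel hc.ne', mul_one]
  split_ifs with h₁ h₂
  · rw [cutoff, min_eq_left (by nlinarith), max_eq_right zero_le_one, mul_one]
  · rw [cutoff, min_eq_right (by nlinarith), max_eq_right (by nlinarith)]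
  · rw [eq_zero hc (not_le.mp h₂).le, mul_zero]

end cutoff

theorem one_add_one_div_pow_le_exp_one (m : ℕ) : (1 + 1 / (m : ℝ)) ^ m ≤ exp 1 := by
  simpa only [one_div] using one_add_inv_pow_le_exp

theorem abs_re_pow_mul_cutoff_sub_le {m : ℕ} (hm : 1 ≤ m) {z : ℂ}
    (hz : ‖z‖ ≤ 1 + 1 / (m : ℝ)) (t : ℂ) :
    |(z ^ m).re * cutoff m ‖z‖ - (t ^ m).re * cutoff m ‖t‖| ≤ 2 * exp 1 * m * ‖z - t‖ := by
  have hm₀ : (0 : ℝ) < m := by exact_mod_cast hm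
  set R : ℝ := 1 + 1 / (m : ℝ)
  have hR_one : 1 ≤ R := le_add_of_nonneg_right (by positivity)
  have hRm : R ^ m ≤ exp 1 := one_add_one_div_pow_le_exp_one m
  have hre_z : |(z ^ m).re| ≤ exp 1 :=
    calc |(z ^ m).re| ≤ ‖z‖ ^ m := (Complex.abs_re_le_norm _).trans (norm_pow z m).le
      _ ≤ exp 1 := (pow_le_pow_left₀ (norm_nonneg z) hz m).trans hRm
  have hcutoff : |cutoff m ‖z‖ - cutoff m ‖t‖| ≤ m * ‖z - t‖ := by
    simpa only [Nat.abs_cast] using (cutoff.abs_sub_le m _ _).trans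
      (mul_le_mul_of_nonneg_left (abs_norm_sub_norm_le z t) (abs_nonneg _))
  have hpow : |(z ^ m).re - (t ^ m).re| * cutoff m ‖t‖ ≤ exp 1 * m * ‖z - t‖ := by
    rcases le_or_gt ‖t‖ R with ht | ht
    · calc |(z ^ m).re - (t ^ m).re| * cutoff m ‖t‖ ≤ ‖z ^ m - t ^ m‖ := by
            rw [← Complex.sub_re]
            exact mul_le_of_le_one_right (abs_nonneg _) (cutoff.le_one _ _) |>.trans
              (Complex.abs_re_le_norm _)
        _ ≤ ‖z - t‖ * m * max ‖z‖ ‖t‖ ^ (m - 1) := norm_pow_sub_pow_le z t m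
        _ ≤ ‖z - t‖ * m * R ^ m := by
            gcongr
            exact (pow_le_pow_left₀ (by positivity) (max_le hz ht) _).trans
              (pow_le_pow_right₀ hR_one (m.sub_le 1))
        _ ≤ ‖z - t‖ * m * exp 1 := by gcongr
        _ = exp 1 * m * ‖z - t‖ := by ring
    · rw [cutoff.eq_zero hm₀ ht.le, mul_zero]
      positivity
  calc |(z ^ m).re * cutoff m ‖z‖ - (t ^ m).re * cutoff m ‖t‖|
      = |(z ^ m).re * (cutoff m ‖z‖ - cutoff m ‖t‖)
          + ((z ^ m).re - (t ^ m).re) * cutoff m ‖t‖| := by ring_nf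
    _ ≤ |(z ^ m).re| * |cutoff m ‖z‖ - cutoff m ‖t‖|
          + |(z ^ m).re - (t ^ m).re| * cutoff m ‖t‖ := by
        rw [← abs_mul, ← abs_of_nonneg (cutoff.nonneg m ‖t‖), ← abs_mul,
          abs_of_nonneg (cutoff.nonneg m ‖t‖)]
        exact abs_add_le _ _
    _ ≤ exp 1 * (m * ‖z - t‖) + exp 1 * m * ‖z - t‖ :=
        add_le_add (mul_le_mul hre_z hcutoff (abs_nonneg _) (exp_pos 1).le) hpow
    _ = 2 * exp 1 * m * ‖z - t‖ := by ring

theorem stmt17 (m : ℕ) (hm : 1 ≤ m) :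
    ∀ z t : ℂ,
      |(if ‖z‖ ≤ 1 then (z ^ m).re
        else if ‖z‖ ≤ 1 + 1 / (m : ℝ) then
          (z ^ m).re * ((m : ℝ) + 1 - (m : ℝ) * ‖z‖)
        else 0) -
       (if ‖t‖ ≤ 1 then (t ^ m).re
        else if ‖t‖ ≤ 1 + 1 / (m : ℝ) then
          (t ^ m).re * ((m : ℝ) + 1 - (m : ℝ) * ‖t‖)
        else 0)| ≤ 8 * (m : ℝ) * ‖z - t‖ := by
  intro z t
  have hm₀ : (0 : ℝ) < m := by exact_mod_cast hm
  have h8 : 2 * exp 1 * m * ‖z - t‖ ≤ 8 * m * ‖z - t‖ := by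
    have := exp_one_lt_d9
    gcongr
    linarith
  rw [← cutoff.mul_eq_ite hm₀, ← cutoff.mul_eq_ite hm₀]
  rcases le_or_gt ‖z‖ (1 + 1 / (m : ℝ)) with hz | hz
  · exact (abs_re_pow_mul_cutoff_sub_le hm hz t).trans h8
  rcases le_or_gt ‖t‖ (1 + 1 / (m : ℝ)) with ht | ht
  · rw [abs_sub_comm, norm_sub_rev] at ⊢
    rw [norm_sub_rev] at h8
    exact (abs_re_pow_mul_cutoff_sub_le hm ht z).trans h8
  · rw [cutoff.eq_zero hm₀ hz.le, cutoff.eq_zero hm₀ ht.le]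
    simpa using h8.trans' (by positivity)
end
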